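/- For a set S of n points in general position whose convex hull is a triangle, and for n even with k = n/2 - 1 (the halving case), at least half of the oriented halving edges of S have exactly one vertex of any containing triangle T to their right; since there are at least n oriented halving edges, at least n/2 = 3k - n + 3 such 'good' oriented k-edges exist. -/

import Mathlib

open Finset
open scoped Classical

abbrev Pt : Type := ℝ × ℝ

/-- Twice the signed area of the triangle `a b c`; its sign is the orientation. -/
noncomputable def det3 (a b c : Pt) : ℝ :=
  (b.1 - a.1) * (c.2 - a.2) - (b.2 - a.2) * (c.1 - a.1)

/-- `S` is in general position: no three of its points are collinear. -/
def GenPos (S : Finset Pt) : Prop :=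
  ∀ a ∈ S, ∀ b ∈ S, ∀ c ∈ S, a ≠ b → a ≠ c → b ≠ c → det3 a b c ≠ 0

/-- A finite point set is in convex position. -/
def ConvexPos (Q : Finset Pt) : Prop :=
  ∀ x ∈ Q, x ∉ convexHull ℝ (↑(Q.erase x) : Set Pt)

/-- `crN S` : the number of 4-element subsets of `S` in convex position. -/
noncomputable def crN (S : Finset Pt) : ℕ :=
  ((S.powersetCard 4).filter ConvexPos).card

/-- Number of points of `S` strictly to the left of the directed line `p → q`. -/
noncomputable def sideCount (S : Finset Pt) (p q : Pt) : ℕ :=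
  (S.filter (fun x => 0 < det3 p q x)).card

/-- `{p, q}` is a `j`-edge of `S`: exactly `j` points of `S` lie in one of the open
half-planes bounded by the line through `p` and `q`. -/
def IsJEdge (S : Finset Pt) (j : ℕ) (p q : Pt) : Prop :=
  p ∈ S ∧ q ∈ S ∧ p ≠ q ∧ (sideCount S p q = j ∨ sideCount S q p = j)

/-- `ej S j` : the number of (unordered) `j`-edges of `S`. -/
noncomputable def ej (S : Finset Pt) (j : ℕ) : ℕ :=
  ((S.powersetCard 2).filter (fun e => ∃ p q : Pt, e = {p, q} ∧ IsJEdge S j p q)).card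

/-- `Ek S k` : the number of `(≤ k)`-edges of `S`. -/
noncomputable def Ek (S : Finset Pt) (k : ℕ) : ℕ :=
  ((S.powersetCard 2).filter
    (fun e => ∃ p q : Pt, e = {p, q} ∧ ∃ j ≤ k, IsJEdge S j p q)).card

/-- The vertices of the convex hull of `S` (its extreme points). -/
noncomputable def hullVertices (S : Finset Pt) : Finset Pt :=
  S.filter (fun x => x ∉ convexHull ℝ (↑(S.erase x) : Set Pt))

lemma det3_self1 (p x : Pt) : det3 p p x = 0 := by simp [det3]
lemma det3_qq (p q : Pt) : det3 p q q = 0 := by simp [det3]; ring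
lemma det3_swap (p q x : Pt) : det3 q p x = - det3 p q x := by simp [det3]; ring
lemma det3_pp (p q : Pt) : det3 p q p = 0 := by simp [det3]
lemma det3_combo (p q a b c : Pt) (w₁ w₂ w₃ : ℝ) (hw : w₁ + w₂ + w₃ = 1) :
    det3 p q (w₁ • a + w₂ • b + w₃ • c)
      = w₁ * det3 p q a + w₂ * det3 p q b + w₃ * det3 p q c := by
  have h : w₁ = 1 - w₂ - w₃ := by linarith
  subst h
  simp [det3, Prod.smul_def, Prod.fst_add, Prod.snd_add, smul_eq_mul]
  ring
lemma hull_mem (a b c : Pt) (hab : a ≠ b) (hac : a ≠ c) (hbc : b ≠ c)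
    (x : Pt) (hx : x ∈ convexHull ℝ ({a, b, c} : Set Pt)) :
    ∃ w₁ w₂ w₃ : ℝ, 0 ≤ w₁ ∧ 0 ≤ w₂ ∧ 0 ≤ w₃ ∧ w₁ + w₂ + w₃ = 1 ∧
      x = w₁ • a + w₂ • b + w₃ • c := by
  have hset : ({a, b, c} : Set Pt) = ↑({a, b, c} : Finset Pt) := by simp
  rw [hset, Finset.convexHull_eq] at hx
  obtain ⟨w, hw0, hw1, hwx⟩ := hx
  have hb : b ∉ ({c} : Finset Pt) := by simp [hbc]
  have ha : a ∉ ({b, c} : Finset Pt) := by simp [hab, hac]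
  refine ⟨w a, w b, w c, hw0 a (by simp), hw0 b (by simp), hw0 c (by simp), ?_, ?_⟩
  · rw [Finset.sum_insert ha, Finset.sum_insert hb, Finset.sum_singleton] at hw1
    linarith
  · rw [Finset.centerMass] at hwx
    rw [Finset.sum_insert ha, Finset.sum_insert hb, Finset.sum_singleton] at hw1 hwx
    rw [hw1] at hwx
    simp only [Finset.sum_insert ha, Finset.sum_insert hb, Finset.sum_singleton, id,
      inv_one, one_smul] at hwx
    rw [← hwx]; ring

/-- If all three triangle vertices are weakly to one side of line pq, with p,q in the
triangle and distinct, then at least two of them lie on the line. -/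
lemma two_zeros (a b c p q : Pt) (hab : a ≠ b) (hac : a ≠ c) (hbc : b ≠ c) (hpq : p ≠ q)
    (hp : p ∈ convexHull ℝ ({a, b, c} : Set Pt)) (hq : q ∈ convexHull ℝ ({a, b, c} : Set Pt))
    (h1 : det3 p q a ≤ 0) (h2 : det3 p q b ≤ 0) (h3 : det3 p q c ≤ 0) :
    (det3 p q a = 0 ∧ det3 p q b = 0) ∨ (det3 p q a = 0 ∧ det3 p q c = 0) ∨
      (det3 p q b = 0 ∧ det3 p q c = 0) := by
  obtain ⟨w₁, w₂, w₃, hw1, hw2, hw3, hws, hwx⟩ := hull_mem a b c hab hac hbc p hp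
  obtain ⟨v₁, v₂, v₃, hv1, hv2, hv3, hvs, hvx⟩ := hull_mem a b c hab hac hbc q hq
  have hdp : w₁ * det3 p q a + w₂ * det3 p q b + w₃ * det3 p q c = 0 := by
    rw [← det3_combo p q a b c _ _ _ hws, ← hwx]; exact det3_pp p q
  have hdq : v₁ * det3 p q a + v₂ * det3 p q b + v₃ * det3 p q c = 0 := by
    rw [← det3_combo p q a b c _ _ _ hvs, ← hvx]; simp [det3]; ring
  -- each product is zero
  have hw1' : w₁ * det3 p q a = 0 := by nlinarith [mul_nonneg hw1 (neg_nonneg.2 h1), mul_nonneg hw2 (neg_nonneg.2 h2), mul_nonneg hw3 (neg_nonneg.2 h3)]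
  have hw2' : w₂ * det3 p q b = 0 := by nlinarith [mul_nonneg hw1 (neg_nonneg.2 h1), mul_nonneg hw2 (neg_nonneg.2 h2), mul_nonneg hw3 (neg_nonneg.2 h3)]
  have hw3' : w₃ * det3 p q c = 0 := by nlinarith [mul_nonneg hw1 (neg_nonneg.2 h1), mul_nonneg hw2 (neg_nonneg.2 h2), mul_nonneg hw3 (neg_nonneg.2 h3)]
  have hv1' : v₁ * det3 p q a = 0 := by nlinarith [mul_nonneg hv1 (neg_nonneg.2 h1), mul_nonneg hv2 (neg_nonneg.2 h2), mul_nonneg hv3 (neg_nonneg.2 h3)]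
  have hv2' : v₂ * det3 p q b = 0 := by nlinarith [mul_nonneg hv1 (neg_nonneg.2 h1), mul_nonneg hv2 (neg_nonneg.2 h2), mul_nonneg hv3 (neg_nonneg.2 h3)]
  have hv3' : v₃ * det3 p q c = 0 := by nlinarith [mul_nonneg hv1 (neg_nonneg.2 h1), mul_nonneg hv2 (neg_nonneg.2 h2), mul_nonneg hv3 (neg_nonneg.2 h3)]
  by_contra hcon
  push_neg at hcon
  -- at least two of the dets are nonzero (i.e. negative)
  -- case analysis
  have key : ∀ s t u : Pt, ∀ α β γ δ ε ζ : ℝ,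
      α * det3 p q s = 0 → β * det3 p q t = 0 → γ * det3 p q u = 0 →
      δ * det3 p q s = 0 → ε * det3 p q t = 0 → ζ * det3 p q u = 0 →
      α + β + γ = 1 → δ + ε + ζ = 1 →
      p = α • s + β • t + γ • u → q = δ • s + ε • t + ζ • u →
      det3 p q s ≠ 0 → det3 p q t ≠ 0 → False := by
    intro s t u α β γ δ ε ζ hα hβ hγ hδ hε hζ hαs hδs hps hqs hs ht
    have hα0 : α = 0 := by rcases mul_eq_zero.1 hα with h|h; exact h; exact absurd h hs
    have hβ0 : β = 0 := by rcases mul_eq_zero.1 hβ with h|h; exact h; exact absurd h ht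
    have hδ0 : δ = 0 := by rcases mul_eq_zero.1 hδ with h|h; exact h; exact absurd h hs
    have hε0 : ε = 0 := by rcases mul_eq_zero.1 hε with h|h; exact h; exact absurd h ht
    have hγ1 : γ = 1 := by linarith
    have hζ1 : ζ = 1 := by linarith
    apply hpq
    rw [hps, hqs, hα0, hβ0, hδ0, hε0, hγ1, hζ1]
  rcases eq_or_ne (det3 p q a) 0 with ha0 | ha0
  · rcases eq_or_ne (det3 p q b) 0 with hb0 | hb0
    · exact (hcon.1 ha0 hb0).elim
    · rcases eq_or_ne (det3 p q c) 0 with hc0 | hc0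
      · exact (hcon.2.1 ha0 hc0).elim
      · exact key b c a w₂ w₃ w₁ v₂ v₃ v₁ hw2' hw3' hw1' hv2' hv3' hv1'
          (by linarith) (by linarith) (by rw [hwx]; module) (by rw [hvx]; module) hb0 hc0
  · rcases eq_or_ne (det3 p q b) 0 with hb0 | hb0
    · rcases eq_or_ne (det3 p q c) 0 with hc0 | hc0
      · exact (hcon.2.2 hb0 hc0).elim
      · exact key a c b w₁ w₃ w₂ v₁ v₃ v₂ hw1' hw3' hw2' hv1' hv3' hv2'
          (by linarith) (by linarith) (by rw [hwx]; module) (by rw [hvx]; module) ha0 hc0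
    · exact key a b c w₁ w₂ w₃ v₁ v₂ v₃ hw1' hw2' hw3' hv1' hv2' hv3'
        hws hvs hwx hvx ha0 hb0

lemma collinear3 (p q a b c : Pt) (hpq : p ≠ q)
    (h1 : det3 p q a = 0) (h2 : det3 p q b = 0) (h3 : det3 p q c = 0) :
    det3 a b c = 0 := by
  simp only [det3] at *
  have hv : q.1 - p.1 ≠ 0 ∨ q.2 - p.2 ≠ 0 := by
    by_contra h
    push_neg at h
    exact hpq (Prod.ext (by linarith [h.1]) (by linarith [h.2]))
  rcases hv with hv | hv
  · apply mul_left_cancel₀ hv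
    rw [mul_zero]
    linear_combination (c.1-b.1)*h1 + (a.1-c.1)*h2 + (b.1-a.1)*h3
  · apply mul_left_cancel₀ hv
    rw [mul_zero]
    linear_combination (c.2-b.2)*h1 + (a.2-c.2)*h2 + (b.2-a.2)*h3

lemma card3 (a b c : Pt) (hab : a ≠ b) (hac : a ≠ c) (hbc : b ≠ c) (P : Pt → Prop) :
    (({a, b, c} : Finset Pt).filter P).card
      = (if P a then 1 else 0) + (if P b then 1 else 0) + (if P c then 1 else 0) := by
  rw [Finset.filter_insert, Finset.filter_insert, Finset.filter_singleton]
  by_cases ha : P a <;> by_cases hb : P b <;> by_cases hc : P c <;>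
    simp [ha, hb, hc, Finset.card_insert_of_notMem, hab, hac, hbc]


lemma good_or (a b c p q : Pt) (hab : a ≠ b) (hac : a ≠ c) (hbc : b ≠ c)
    (htri : det3 a b c ≠ 0) (hpq : p ≠ q)
    (hp : p ∈ convexHull ℝ ({a, b, c} : Set Pt)) (hq : q ∈ convexHull ℝ ({a, b, c} : Set Pt)) :
    (({a, b, c} : Finset Pt).filter (fun t => det3 p q t < 0)).card = 1 ∨
      (({a, b, c} : Finset Pt).filter (fun t => det3 q p t < 0)).card = 1 := by
  rw [card3 a b c hab hac hbc, card3 a b c hab hac hbc]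
  simp only [det3_swap p q, neg_lt_zero]
  rcases lt_trichotomy (det3 p q a) 0 with h1|h1|h1 <;>
    rcases lt_trichotomy (det3 p q b) 0 with h2|h2|h2 <;>
      rcases lt_trichotomy (det3 p q c) 0 with h3|h3|h3
  · rcases two_zeros a b c p q hab hac hbc hpq hp hq (le_of_lt h1) (le_of_lt h2) (le_of_lt h3) with ⟨z1,z2⟩|⟨z1,z2⟩|⟨z1,z2⟩ <;> linarith
  · rcases two_zeros a b c p q hab hac hbc hpq hp hq (le_of_lt h1) (le_of_lt h2) (le_of_eq h3) with ⟨z1,z2⟩|⟨z1,z2⟩|⟨z1,z2⟩ <;> linarith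
  · right; simp [h1, asymm h1, h2, asymm h2, h3, asymm h3]
  · rcases two_zeros a b c p q hab hac hbc hpq hp hq (le_of_lt h1) (le_of_eq h2) (le_of_lt h3) with ⟨z1,z2⟩|⟨z1,z2⟩|⟨z1,z2⟩ <;> linarith
  · left; simp [h1, asymm h1, h2, h3]
  · left; simp [h1, asymm h1, h2, h3, asymm h3]
  · right; simp [h1, asymm h1, h2, asymm h2, h3, asymm h3]
  · left; simp [h1, asymm h1, h2, asymm h2, h3]
  · left; simp [h1, asymm h1, h2, asymm h2, h3, asymm h3]
  · rcases two_zeros a b c p q hab hac hbc hpq hp hq (le_of_eq h1) (le_of_lt h2) (le_of_lt h3) with ⟨z1,z2⟩|⟨z1,z2⟩|⟨z1,z2⟩ <;> linarith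
  · left; simp [h1, h2, asymm h2, h3]
  · left; simp [h1, h2, asymm h2, h3, asymm h3]
  · left; simp [h1, h2, h3, asymm h3]
  · exact absurd (collinear3 p q a b c hpq h1 h2 h3) htri
  · right; simp [h1, h2, h3, asymm h3]
  · left; simp [h1, h2, asymm h2, h3, asymm h3]
  · right; simp [h1, h2, asymm h2, h3]
  · rcases two_zeros a b c q p hab hac hbc (Ne.symm hpq) hq hp (by rw [det3_swap]; linarith) (by rw [det3_swap]; linarith) (by rw [det3_swap]; linarith) with ⟨z1,z2⟩|⟨z1,z2⟩|⟨z1,z2⟩ <;> rw [det3_swap] at z1 z2 <;> linarith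
  · right; simp [h1, asymm h1, h2, asymm h2, h3, asymm h3]
  · left; simp [h1, asymm h1, h2, asymm h2, h3]
  · left; simp [h1, asymm h1, h2, asymm h2, h3, asymm h3]
  · left; simp [h1, asymm h1, h2, h3, asymm h3]
  · right; simp [h1, asymm h1, h2, h3]
  · rcases two_zeros a b c q p hab hac hbc (Ne.symm hpq) hq hp (by rw [det3_swap]; linarith) (by rw [det3_swap]; linarith) (by rw [det3_swap]; linarith) with ⟨z1,z2⟩|⟨z1,z2⟩|⟨z1,z2⟩ <;> rw [det3_swap] at z1 z2 <;> linarith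
  · left; simp [h1, asymm h1, h2, asymm h2, h3, asymm h3]
  · rcases two_zeros a b c q p hab hac hbc (Ne.symm hpq) hq hp (by rw [det3_swap]; linarith) (by rw [det3_swap]; linarith) (by rw [det3_swap]; linarith) with ⟨z1,z2⟩|⟨z1,z2⟩|⟨z1,z2⟩ <;> rw [det3_swap] at z1 z2 <;> linarith
  · rcases two_zeros a b c q p hab hac hbc (Ne.symm hpq) hq hp (by rw [det3_swap]; linarith) (by rw [det3_swap]; linarith) (by rw [det3_swap]; linarith) with ⟨z1,z2⟩|⟨z1,z2⟩|⟨z1,z2⟩ <;> rw [det3_swap] at z1 z2 <;> linarith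

def upv (v : Pt) : Prop := 0 < v.2 ∨ (v.2 = 0 ∧ 0 < v.1)
noncomputable def uvec (p q : Pt) : Pt := if upv (q - p) then q - p else p - q
noncomputable def crossv (u v : Pt) : ℝ := u.1 * v.2 - u.2 * v.1

lemma crossv_anti (u v : Pt) : crossv u v = - crossv v u := by simp [crossv]; ring
lemma crossv_self (u : Pt) : crossv u u = 0 := by simp [crossv]; ring
lemma crossv_negl (u v : Pt) : crossv (-u) v = - crossv u v := by simp [crossv]; ring
lemma crossv_negr (u v : Pt) : crossv u (-v) = - crossv u v := by simp [crossv]; ring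
lemma det3_eq_crossv (p q x : Pt) : det3 p q x = crossv (q - p) (x - p) := by
  simp [det3, crossv]

lemma uvec_cases {p q : Pt} : q - p = uvec p q ∨ q - p = -uvec p q := by
  unfold uvec; split
  · exact Or.inl rfl
  · right; rw [neg_sub]

lemma uvec_up {p q : Pt} (h : upv (q - p)) : uvec p q = q - p := if_pos h
lemma uvec_down {p q : Pt} (h : ¬ upv (q - p)) : uvec p q = p - q := if_neg h

lemma uvec_y {p q : Pt} (h : q ≠ p) : 0 ≤ (uvec p q).2 ∧ ((uvec p q).2 = 0 → 0 < (uvec p q).1) := by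
  have hne : q - p ≠ 0 := sub_ne_zero.mpr h
  have hco : ¬ ((q - p).1 = 0 ∧ (q - p).2 = 0) := by
    intro hc; exact hne (Prod.ext hc.1 hc.2)
  unfold uvec; split
  · rename_i hu
    rcases hu with hu | hu
    · constructor
      · exact le_of_lt hu
      · intro h0; exact absurd h0 (ne_of_gt hu)
    · exact ⟨le_of_eq hu.1.symm, fun _ => hu.2⟩
  · rename_i hu
    unfold upv at hu
    push_neg at hu
    have h2 : (q - p).2 ≤ 0 := hu.1
    constructor
    · have : (p - q).2 = -(q - p).2 := by simp [Prod.snd_sub]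
      rw [this]; linarith
    · intro h0
      have h2' : (q - p).2 = 0 := by
        have : (p - q).2 = -(q - p).2 := by simp [Prod.snd_sub]
        rw [this] at h0; linarith
      have h1' : (q - p).1 ≤ 0 := hu.2 h2'
      have h1ne : (q - p).1 ≠ 0 := fun hc => hco ⟨hc, h2'⟩
      have : (p - q).1 = -(q - p).1 := by simp [Prod.fst_sub]
      rw [this]
      cases lt_or_eq_of_le h1' with
      | inl h => linarith
      | inr h => exact absurd h h1ne

lemma trans_core (u v w : Pt)
    (hu2 : 0 ≤ u.2) (hw2 : 0 ≤ w.2)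
    (hv2 : 0 ≤ v.2) (hv1 : v.2 = 0 → 0 < v.1)
    (huv : 0 < crossv u v) (hvw : 0 < crossv v w) (hne : crossv u w ≠ 0) :
    0 < crossv u w := by
  have hv2' : 0 < v.2 := by
    rcases eq_or_lt_of_le hv2 with h | h
    · exfalso
      have hv1' := hv1 h.symm
      have : crossv u v = - (u.2 * v.1) := by simp [crossv, ← h]
      nlinarith [mul_nonneg hu2 (le_of_lt hv1')]
    · exact h
  have hid : crossv u w * v.2 = crossv u v * w.2 + crossv v w * u.2 := by
    simp [crossv]; ring
  rcases hne.lt_or_gt with h | h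
  · exfalso
    nlinarith [mul_nonneg (le_of_lt huv) hw2, mul_nonneg (le_of_lt hvw) hu2,
      mul_neg_of_neg_of_pos h hv2']
  · exact h

noncomputable def rnk (p : Pt) (Q : Finset Pt) (q : Pt) : ℕ :=
  (Q.filter (fun x => 0 < crossv (uvec p x) (uvec p q))).card

section rank
variable {p : Pt} {Q : Finset Pt}
variable (hQp : ∀ q ∈ Q, q ≠ p)
variable (hgp : ∀ q ∈ Q, ∀ x ∈ Q, q ≠ x → det3 p q x ≠ 0)

include hQp hgp

omit hQp in
lemma crossv_ne {q x : Pt} (hq : q ∈ Q) (hx : x ∈ Q) (hne : q ≠ x) :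
    crossv (uvec p q) (uvec p x) ≠ 0 := by
  intro h0
  apply hgp q hq x hx hne
  rw [det3_eq_crossv]
  rcases (uvec_cases : q - p = uvec p q ∨ _) with e1 | e1 <;>
    rcases (uvec_cases : x - p = uvec p x ∨ _) with e2 | e2 <;>
      rw [e1, e2] <;> simp [crossv_negl, crossv_negr, h0]

lemma rnk_lt_of_pos {q x : Pt} (hq : q ∈ Q) (hx : x ∈ Q)
    (hpos : 0 < crossv (uvec p x) (uvec p q)) : rnk p Q x < rnk p Q q := by
  have hxq : x ≠ q := by
    intro h; subst h; rw [crossv_self] at hpos; exact lt_irrefl 0 hpos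
  have hsub : insert x (Q.filter (fun y => 0 < crossv (uvec p y) (uvec p x)))
      ⊆ Q.filter (fun y => 0 < crossv (uvec p y) (uvec p q)) := by
    intro y hy
    rcases Finset.mem_insert.mp hy with rfl | hy
    · exact Finset.mem_filter.mpr ⟨hx, hpos⟩
    · obtain ⟨hyQ, hyx⟩ := Finset.mem_filter.mp hy
      have hyq : y ≠ q := by
        intro h
        rw [h] at hyx
        have := crossv_anti (uvec p x) (uvec p q)
        linarith
      refine Finset.mem_filter.mpr ⟨hyQ, ?_⟩
      exact trans_core (uvec p y) (uvec p x) (uvec p q)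
        (uvec_y (hQp y hyQ)).1 (uvec_y (hQp q hq)).1
        (uvec_y (hQp x hx)).1 (uvec_y (hQp x hx)).2
        hyx hpos (crossv_ne hgp hyQ hq hyq)
  have hnotmem : x ∉ Q.filter (fun y => 0 < crossv (uvec p y) (uvec p x)) := by
    simp [crossv_self]
  have := Finset.card_le_card hsub
  rw [Finset.card_insert_of_notMem hnotmem] at this
  unfold rnk
  omega

lemma rnk_lt_iff {q x : Pt} (hq : q ∈ Q) (hx : x ∈ Q) (hne : x ≠ q) :
    0 < crossv (uvec p x) (uvec p q) ↔ rnk p Q x < rnk p Q q := by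
  constructor
  · exact rnk_lt_of_pos hQp hgp hq hx
  · intro h
    by_contra hc
    have hne0 := crossv_ne hgp hx hq hne
    have hneg : crossv (uvec p x) (uvec p q) < 0 := lt_of_le_of_ne (not_lt.mp hc) hne0
    have hpos : 0 < crossv (uvec p q) (uvec p x) := by
      have := crossv_anti (uvec p x) (uvec p q); linarith
    have := rnk_lt_of_pos hQp hgp hx hq hpos
    omega

lemma rnk_injOn {q x : Pt} (hq : q ∈ Q) (hx : x ∈ Q) (hne : x ≠ q) :
    rnk p Q x ≠ rnk p Q q := by
  intro h
  rcases lt_or_gt_of_ne (crossv_ne hgp hx hq hne) with h' | h'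
  · have hpos : 0 < crossv (uvec p q) (uvec p x) := by
      have := crossv_anti (uvec p x) (uvec p q); linarith
    have := rnk_lt_of_pos hQp hgp hx hq hpos
    omega
  · have := rnk_lt_of_pos hQp hgp hq hx h'
    omega

omit hQp hgp in
lemma rnk_lt_card {q : Pt} (hq : q ∈ Q) : rnk p Q q < Q.card := by
  have hsub : Q.filter (fun x => 0 < crossv (uvec p x) (uvec p q)) ⊆ Q.erase q := by
    intro y hy
    obtain ⟨hyQ, hyc⟩ := Finset.mem_filter.mp hy
    refine Finset.mem_erase.mpr ⟨?_, hyQ⟩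
    intro h; subst h; rw [crossv_self] at hyc; exact lt_irrefl 0 hyc
  have h1 := Finset.card_le_card hsub
  rw [Finset.card_erase_of_mem hq] at h1
  have h2 : 0 < Q.card := Finset.card_pos.mpr ⟨q, hq⟩
  unfold rnk
  omega

lemma rnk_surj {i : ℕ} (hi : i < Q.card) : ∃ q ∈ Q, rnk p Q q = i := by
  have himg : Q.image (rnk p Q) = Finset.range Q.card := by
    apply Finset.eq_of_subset_of_card_le
    · intro j hj
      obtain ⟨q, hq, rfl⟩ := Finset.mem_image.mp hj
      exact Finset.mem_range.mpr (rnk_lt_card hq)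
    · rw [Finset.card_range, Finset.card_image_of_injOn]
      intro x hx y hy hxy
      by_contra hne
      exact rnk_injOn hQp hgp hy hx hne hxy
  have : i ∈ Q.image (rnk p Q) := by rw [himg]; exact Finset.mem_range.mpr hi
  obtain ⟨q, hq, hrq⟩ := Finset.mem_image.mp this
  exact ⟨q, hq, hrq⟩

end rank

noncomputable def cAf (p : Pt) (Q : Finset Pt) (i : ℕ) : ℕ :=
  (Q.filter (fun x => upv (x - p) ∧ rnk p Q x < i)).card
noncomputable def cBf (p : Pt) (Q : Finset Pt) (i : ℕ) : ℕ :=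
  (Q.filter (fun x => ¬ upv (x - p) ∧ rnk p Q x < i)).card
noncomputable def GG (p : Pt) (Q : Finset Pt) (i : ℕ) : ℤ :=
  (cAf p Q i : ℤ) + (Q.filter (fun x => ¬ upv (x - p))).card - cBf p Q i

section walk
variable {p : Pt} {Q : Finset Pt}
variable (hQp : ∀ q ∈ Q, q ≠ p)
variable (hgp : ∀ q ∈ Q, ∀ x ∈ Q, q ≠ x → det3 p q x ≠ 0)

include hQp hgp

-- step lemmas
lemma rnk_uniq {i : ℕ} {q : Pt} (hq : q ∈ Q) (hrq : rnk p Q q = i) :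
    ∀ x ∈ Q, rnk p Q x = i → x = q := by
  intro x hx hrx
  by_contra hne
  exact rnk_injOn hQp hgp hq hx hne (by omega)

lemma cAf_succ {i : ℕ} {q : Pt} (hq : q ∈ Q) (hrq : rnk p Q q = i) :
    cAf p Q (i + 1) = cAf p Q i + (if upv (q - p) then 1 else 0) := by
  have huniq := rnk_uniq hQp hgp hq hrq
  unfold cAf
  by_cases hPq : upv (q - p)
  · rw [if_pos hPq]
    have hset : Q.filter (fun x => upv (x - p) ∧ rnk p Q x < i + 1)
        = insert q (Q.filter (fun x => upv (x - p) ∧ rnk p Q x < i)) := by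
      ext x
      simp only [Finset.mem_filter, Finset.mem_insert]
      constructor
      · rintro ⟨hxQ, hPx, hlt⟩
        rcases Nat.lt_succ_iff_lt_or_eq.mp hlt with h | h
        · exact Or.inr ⟨hxQ, hPx, h⟩
        · exact Or.inl (huniq x hxQ h)
      · rintro (rfl | ⟨hxQ, hPx, hlt⟩)
        · exact ⟨hq, hPq, by omega⟩
        · exact ⟨hxQ, hPx, by omega⟩
    rw [hset, Finset.card_insert_of_notMem]
    simp only [Finset.mem_filter, not_and]
    intro _ _
    omega
  · rw [if_neg hPq, add_zero]
    congr 1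
    ext x
    simp only [Finset.mem_filter]
    constructor
    · rintro ⟨hxQ, hPx, hlt⟩
      refine ⟨hxQ, hPx, ?_⟩
      rcases Nat.lt_succ_iff_lt_or_eq.mp hlt with h | h
      · exact h
      · exact absurd (huniq x hxQ h ▸ hPx) hPq
    · rintro ⟨hxQ, hPx, hlt⟩
      exact ⟨hxQ, hPx, by omega⟩

lemma cBf_succ {i : ℕ} {q : Pt} (hq : q ∈ Q) (hrq : rnk p Q q = i) :
    cBf p Q (i + 1) = cBf p Q i + (if upv (q - p) then 0 else 1) := by
  have huniq := rnk_uniq hQp hgp hq hrq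
  unfold cBf
  by_cases hPq : upv (q - p)
  · rw [if_pos hPq, add_zero]
    congr 1
    ext x
    simp only [Finset.mem_filter]
    constructor
    · rintro ⟨hxQ, hPx, hlt⟩
      refine ⟨hxQ, hPx, ?_⟩
      rcases Nat.lt_succ_iff_lt_or_eq.mp hlt with h | h
      · exact h
      · exact absurd hPq (huniq x hxQ h ▸ hPx)
    · rintro ⟨hxQ, hPx, hlt⟩
      exact ⟨hxQ, hPx, by omega⟩
  · rw [if_neg hPq]
    have hset : Q.filter (fun x => ¬ upv (x - p) ∧ rnk p Q x < i + 1)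
        = insert q (Q.filter (fun x => ¬ upv (x - p) ∧ rnk p Q x < i)) := by
      ext x
      simp only [Finset.mem_filter, Finset.mem_insert]
      constructor
      · rintro ⟨hxQ, hPx, hlt⟩
        rcases Nat.lt_succ_iff_lt_or_eq.mp hlt with h | h
        · exact Or.inr ⟨hxQ, hPx, h⟩
        · exact Or.inl (huniq x hxQ h)
      · rintro (rfl | ⟨hxQ, hPx, hlt⟩)
        · exact ⟨hq, hPq, by omega⟩
        · exact ⟨hxQ, hPx, by omega⟩
    rw [hset, Finset.card_insert_of_notMem]
    simp only [Finset.mem_filter, not_and]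
    intro _ _
    omega

lemma GG_step {i : ℕ} {q : Pt} (hq : q ∈ Q) (hrq : rnk p Q q = i) :
    GG p Q (i + 1) = GG p Q i + (if upv (q - p) then 1 else -1) := by
  have hA := cAf_succ hQp hgp hq hrq
  have hB := cBf_succ hQp hgp hq hrq
  unfold GG
  rw [hA, hB]
  by_cases h : upv (q - p) <;> simp [h] <;> push_cast <;> ring

end walk

section value
variable {p : Pt} {Q : Finset Pt}
variable (hQp : ∀ q ∈ Q, q ≠ p)
variable (hgp : ∀ q ∈ Q, ∀ x ∈ Q, q ≠ x → det3 p q x ≠ 0)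

omit hQp hgp in
lemma GG_zero : GG p Q 0 = ((Q.filter (fun x => ¬ upv (x - p))).card : ℤ) := by
  unfold GG cAf cBf
  have h1 : Q.filter (fun x => upv (x - p) ∧ rnk p Q x < 0) = ∅ :=
    Finset.filter_false_of_mem (fun x _ => by omega)
  have h2 : Q.filter (fun x => ¬ upv (x - p) ∧ rnk p Q x < 0) = ∅ :=
    Finset.filter_false_of_mem (fun x _ => by omega)
  rw [h1, h2]
  simp

omit hQp hgp in
lemma GG_N : GG p Q Q.card = ((Q.filter (fun x => upv (x - p))).card : ℤ) := by
  unfold GG cAf cBf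
  have h1 : Q.filter (fun x => upv (x - p) ∧ rnk p Q x < Q.card)
      = Q.filter (fun x => upv (x - p)) := by
    apply Finset.filter_congr
    intro x hx
    simp [rnk_lt_card hx]
  have h2 : Q.filter (fun x => ¬ upv (x - p) ∧ rnk p Q x < Q.card)
      = Q.filter (fun x => ¬ upv (x - p)) := by
    apply Finset.filter_congr
    intro x hx
    simp [rnk_lt_card hx]
  rw [h1, h2]
  ring

include hQp hgp

lemma hval_up {q : Pt} (hq : q ∈ Q) (hup : upv (q - p)) :
    ((Q.filter (fun x => det3 p q x < 0)).card : ℤ) = GG p Q (rnk p Q q) := by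
  have hqp : q - p = uvec p q := (uvec_up hup).symm
  have hsplit : Q.filter (fun x => det3 p q x < 0)
      = (Q.filter (fun x => upv (x - p) ∧ rnk p Q x < rnk p Q q))
        ∪ (Q.filter (fun x => ¬ upv (x - p) ∧ ¬ (rnk p Q x < rnk p Q q))) := by
    ext x
    simp only [Finset.mem_filter, Finset.mem_union]
    constructor
    · rintro ⟨hxQ, hdet⟩
      refine Or.imp (fun h => ⟨hxQ, h⟩) (fun h => ⟨hxQ, h⟩) ?_
      have hne : x ≠ q := by
        intro h; subst h
        rw [det3_eq_crossv, crossv_self] at hdet; exact lt_irrefl 0 hdet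
      rw [det3_eq_crossv, hqp] at hdet
      by_cases hxup : upv (x - p)
      · left
        refine ⟨hxup, (rnk_lt_iff hQp hgp hq hxQ hne).mp ?_⟩
        rw [← uvec_up hxup] at hdet
        have := crossv_anti (uvec p x) (uvec p q)
        linarith
      · right
        refine ⟨hxup, fun hlt => ?_⟩
        have hpos := (rnk_lt_iff hQp hgp hq hxQ hne).mpr hlt
        have hxd : x - p = -(uvec p x) := by rw [uvec_down hxup]; simp
        rw [hxd, crossv_negr] at hdet
        have := crossv_anti (uvec p x) (uvec p q)
        linarith
    · rintro (⟨hxQ, hxup, hlt⟩ | ⟨hxQ, hxup, hgt⟩)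
      · refine ⟨hxQ, ?_⟩
        have hne : x ≠ q := by
          intro h; subst h; exact absurd hlt (lt_irrefl _)
        have hpos := (rnk_lt_iff hQp hgp hq hxQ hne).mpr hlt
        rw [det3_eq_crossv, hqp, ← uvec_up hxup]
        have := crossv_anti (uvec p x) (uvec p q)
        linarith
      · refine ⟨hxQ, ?_⟩
        have hne : x ≠ q := by
          intro h; subst h; exact hxup hup
        have hneg : crossv (uvec p x) (uvec p q) < 0 := by
          have h0 := crossv_ne hgp hxQ hq hne
          rcases lt_or_gt_of_ne h0 with h | h
          · exact h
          · exact absurd ((rnk_lt_iff hQp hgp hq hxQ hne).mp h) hgt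
        have hxd : x - p = -(uvec p x) := by rw [uvec_down hxup]; simp
        rw [det3_eq_crossv, hqp, hxd, crossv_negr]
        have := crossv_anti (uvec p x) (uvec p q)
        linarith
  rw [hsplit, Finset.card_union_of_disjoint]
  · unfold GG cAf cBf
    have hcount : (Q.filter (fun x => ¬ upv (x - p) ∧ rnk p Q x < rnk p Q q)).card
        + (Q.filter (fun x => ¬ upv (x - p) ∧ ¬ (rnk p Q x < rnk p Q q))).card
        = (Q.filter (fun x => ¬ upv (x - p))).card := by
      rw [← Finset.filter_filter, ← Finset.filter_filter]
      exact Finset.card_filter_add_card_filter_not (fun x => rnk p Q x < rnk p Q q)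
    push_cast
    omega
  · rw [Finset.disjoint_left]
    intro x hx1 hx2
    obtain ⟨_, h1, _⟩ := Finset.mem_filter.mp hx1
    obtain ⟨_, h2, _⟩ := Finset.mem_filter.mp hx2
    exact h2 h1

lemma hval_down {q : Pt} (hq : q ∈ Q) (hup : ¬ upv (q - p)) :
    ((Q.filter (fun x => det3 p q x < 0)).card : ℤ) = Q.card - GG p Q (rnk p Q q) := by
  have hqp : q - p = -(uvec p q) := by rw [uvec_down hup]; simp
  have hsplit : Q.filter (fun x => det3 p q x < 0)
      = (Q.filter (fun x => upv (x - p) ∧ ¬ (rnk p Q x < rnk p Q q)))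
        ∪ (Q.filter (fun x => ¬ upv (x - p) ∧ rnk p Q x < rnk p Q q)) := by
    ext x
    simp only [Finset.mem_filter, Finset.mem_union]
    constructor
    · rintro ⟨hxQ, hdet⟩
      refine Or.imp (fun h => ⟨hxQ, h⟩) (fun h => ⟨hxQ, h⟩) ?_
      have hne : x ≠ q := by
        intro h; subst h
        rw [det3_eq_crossv, crossv_self] at hdet
        exact lt_irrefl 0 hdet
      rw [det3_eq_crossv, hqp, crossv_negl] at hdet
      by_cases hxup : upv (x - p)
      · left
        refine ⟨hxup, fun hlt => ?_⟩
        have hpos := (rnk_lt_iff hQp hgp hq hxQ hne).mpr hlt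
        rw [← uvec_up hxup] at hdet
        have := crossv_anti (uvec p x) (uvec p q)
        linarith
      · right
        refine ⟨hxup, (rnk_lt_iff hQp hgp hq hxQ hne).mp ?_⟩
        have hxd : x - p = -(uvec p x) := by rw [uvec_down hxup]; simp
        rw [hxd, crossv_negr] at hdet
        have := crossv_anti (uvec p x) (uvec p q)
        linarith
    · rintro (⟨hxQ, hxup, hgt⟩ | ⟨hxQ, hxup, hlt⟩)
      · refine ⟨hxQ, ?_⟩
        have hne : x ≠ q := by
          intro h; subst h; exact hup hxup
        have hneg : crossv (uvec p x) (uvec p q) < 0 := by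
          have h0 := crossv_ne hgp hxQ hq hne
          rcases lt_or_gt_of_ne h0 with h | h
          · exact h
          · exact absurd ((rnk_lt_iff hQp hgp hq hxQ hne).mp h) hgt
        rw [det3_eq_crossv, hqp, crossv_negl, ← uvec_up hxup]
        have := crossv_anti (uvec p x) (uvec p q)
        linarith
      · refine ⟨hxQ, ?_⟩
        have hne : x ≠ q := by
          intro h; subst h; exact absurd hlt (lt_irrefl _)
        have hpos := (rnk_lt_iff hQp hgp hq hxQ hne).mpr hlt
        have hxd : x - p = -(uvec p x) := by rw [uvec_down hxup]; simp
        rw [det3_eq_crossv, hqp, hxd, crossv_negr, crossv_negl]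
        have := crossv_anti (uvec p x) (uvec p q)
        linarith
  rw [hsplit, Finset.card_union_of_disjoint]
  · unfold GG cAf cBf
    have hcount : (Q.filter (fun x => upv (x - p) ∧ rnk p Q x < rnk p Q q)).card
        + (Q.filter (fun x => upv (x - p) ∧ ¬ (rnk p Q x < rnk p Q q))).card
        = (Q.filter (fun x => upv (x - p))).card := by
      rw [← Finset.filter_filter, ← Finset.filter_filter]
      exact Finset.card_filter_add_card_filter_not (fun x => rnk p Q x < rnk p Q q)
    have htot : (Q.filter (fun x => upv (x - p))).card
        + (Q.filter (fun x => ¬ upv (x - p))).card = Q.card :=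
      Finset.card_filter_add_card_filter_not (fun x => upv (x - p))
    push_cast
    omega
  · rw [Finset.disjoint_left]
    intro x hx1 hx2
    obtain ⟨_, h1, _⟩ := Finset.mem_filter.mp hx1
    obtain ⟨_, h2, _⟩ := Finset.mem_filter.mp hx2
    exact h2 h1

end value

lemma ivt_up (G : ℕ → ℤ) (N : ℕ)
    (hstep : ∀ i < N, G (i+1) = G i + 1 ∨ G (i+1) = G i - 1) (v : ℤ)
    (h0 : G 0 ≤ v) (hN : v < G N) : ∃ i < N, G i = v ∧ G (i+1) = v + 1 := by
  induction N with
  | zero => exact absurd hN (not_lt.mpr h0)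
  | succ N ih =>
    by_cases h : G N ≤ v
    · have hs := hstep N (by omega)
      refine ⟨N, by omega, ?_, ?_⟩ <;> omega
    · push_neg at h
      obtain ⟨i, hi, h1, h2⟩ := ih (fun i hi => hstep i (by omega)) h
      exact ⟨i, by omega, h1, h2⟩

lemma exists_halving (p : Pt) (Q : Finset Pt) (hQp : ∀ q ∈ Q, q ≠ p)
    (hgp : ∀ q ∈ Q, ∀ x ∈ Q, q ≠ x → det3 p q x ≠ 0) (hodd : Q.card % 2 = 1) :
    ∃ q ∈ Q, (Q.filter (fun x => det3 p q x < 0)).card = Q.card / 2 := by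
  set N := Q.card with hN
  set m := N / 2 with hm
  set aQ := (Q.filter (fun x => upv (x - p))).card with haQ
  set bQ := (Q.filter (fun x => ¬ upv (x - p))).card with hbQ
  have hab : aQ + bQ = N := Finset.card_filter_add_card_filter_not (fun x => upv (x - p))
  have hG0 : GG p Q 0 = (bQ : ℤ) := GG_zero
  have hGN : GG p Q N = (aQ : ℤ) := GG_N
  have hstep' : ∀ i < N, ∃ q ∈ Q, rnk p Q q = i ∧
      GG p Q (i+1) = GG p Q i + (if upv (q - p) then 1 else -1) := by
    intro i hi
    obtain ⟨q, hq, hrq⟩ := rnk_surj hQp hgp hi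
    exact ⟨q, hq, hrq, GG_step hQp hgp hq hrq⟩
  have hstep : ∀ i < N, GG p Q (i+1) = GG p Q i + 1 ∨ GG p Q (i+1) = GG p Q i - 1 := by
    intro i hi
    obtain ⟨q, _, _, hs⟩ := hstep' i hi
    by_cases h : upv (q - p)
    · left; rw [hs, if_pos h]
    · right; rw [hs, if_neg h]; ring
  by_cases hb : bQ ≤ m
  · have hup : (m : ℤ) < GG p Q N := by
      rw [hGN]; push_cast; omega
    have h0 : GG p Q 0 ≤ (m : ℤ) := by rw [hG0]; push_cast; omega
    obtain ⟨i, hi, h1, h2⟩ := ivt_up (GG p Q) N hstep m h0 hup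
    obtain ⟨q, hq, hrq, hstepq⟩ := hstep' i hi
    have hqup : upv (q - p) := by
      by_contra h
      rw [if_neg h] at hstepq
      omega
    refine ⟨q, hq, ?_⟩
    have hv := hval_up hQp hgp hq hqup
    rw [hrq, h1] at hv
    exact_mod_cast hv
  · push_neg at hb
    have h0 : -GG p Q 0 ≤ -((m : ℤ) + 1) := by rw [hG0]; push_cast; omega
    have hup : -((m : ℤ) + 1) < -GG p Q N := by
      rw [hGN]; push_cast; omega
    obtain ⟨i, hi, h1, h2⟩ := ivt_up (fun j => -GG p Q j) N
      (fun i hi => by have h := hstep i hi; omega) _ h0 hup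
    obtain ⟨q, hq, hrq, hstepq⟩ := hstep' i hi
    have h1 : -GG p Q i = -((m : ℤ) + 1) := h1
    have h2 : -GG p Q (i + 1) = -((m : ℤ) + 1) + 1 := h2
    have hGi : GG p Q i = (m : ℤ) + 1 := by omega
    have hGi1 : GG p Q (i+1) = (m : ℤ) := by omega
    have hqdown : ¬ upv (q - p) := by
      intro h
      rw [if_pos h] at hstepq
      omega
    refine ⟨q, hq, ?_⟩
    have hv := hval_down hQp hgp hq hqdown
    rw [hrq, hGi] at hv
    have : ((Q.filter (fun x => det3 p q x < 0)).card : ℤ) = (N : ℤ) - (m : ℤ) - 1 := by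
      rw [hv]; ring
    have hNm : (N : ℤ) - (m : ℤ) - 1 = (m : ℤ) := by push_cast; omega
    rw [hNm] at this
    exact_mod_cast this


/-- let `S` be a set of `n` points (`n` even) in general position
with triangular convex hull, contained in a triangle `T` with vertices
`t₁ t₂ t₃ ∉ S`, and let `k = n/2 - 1` (the halving case).  Then at least half of
the oriented `k`-edges of `S` have exactly one vertex of `T` strictly to their
right, and there are at least `n/2 = 3k - n + 3` such good oriented `k`-edges. -/
theorem statement17 (S : Finset Pt) (n : ℕ) (hcard : S.card = n) (hn : Even n)
    (hn3 : 3 ≤ n) (hgp : GenPos S) (hhull : (hullVertices S).card = 3)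
    (t₁ t₂ t₃ : Pt) (htri : det3 t₁ t₂ t₃ ≠ 0)
    (ht₁ : t₁ ∉ S) (ht₂ : t₂ ∉ S) (ht₃ : t₃ ∉ S)
    (hsub : (↑S : Set Pt) ⊆ convexHull ℝ ({t₁, t₂, t₃} : Set Pt)) :
    ((S ×ˢ S).filter (fun pq : Pt × Pt => pq.1 ≠ pq.2 ∧
        (S.filter (fun x => det3 pq.1 pq.2 x < 0)).card = n / 2 - 1)).card ≤
      2 * ((S ×ˢ S).filter (fun pq : Pt × Pt => pq.1 ≠ pq.2 ∧
        (S.filter (fun x => det3 pq.1 pq.2 x < 0)).card = n / 2 - 1 ∧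
        (({t₁, t₂, t₃} : Finset Pt).filter (fun t => det3 pq.1 pq.2 t < 0)).card = 1)).card ∧
    n / 2 ≤ ((S ×ˢ S).filter (fun pq : Pt × Pt => pq.1 ≠ pq.2 ∧
        (S.filter (fun x => det3 pq.1 pq.2 x < 0)).card = n / 2 - 1 ∧
        (({t₁, t₂, t₃} : Finset Pt).filter (fun t => det3 pq.1 pq.2 t < 0)).card = 1)).card := by
  have hmod : n % 2 = 0 := Nat.even_iff.mp hn
  have hn4 : 4 ≤ n := by omega
  set k := n / 2 - 1 with hk
  set H := (S ×ˢ S).filter (fun pq : Pt × Pt => pq.1 ≠ pq.2 ∧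
      (S.filter (fun x => det3 pq.1 pq.2 x < 0)).card = n / 2 - 1) with hH
  set Good := (S ×ˢ S).filter (fun pq : Pt × Pt => pq.1 ≠ pq.2 ∧
      (S.filter (fun x => det3 pq.1 pq.2 x < 0)).card = n / 2 - 1 ∧
      (({t₁, t₂, t₃} : Finset Pt).filter (fun t => det3 pq.1 pq.2 t < 0)).card = 1) with hGood
  -- triangle vertices are distinct
  have h12 : t₁ ≠ t₂ := by rintro rfl; exact htri (det3_self1 t₁ t₃)
  have h13 : t₁ ≠ t₃ := by rintro rfl; exact htri (det3_pp t₁ t₂)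
  have h23 : t₂ ≠ t₃ := by rintro rfl; exact htri (det3_qq t₁ t₂)
  -- swapping an oriented halving edge gives an oriented halving edge
  have hswap : ∀ pq : Pt × Pt, pq ∈ H → pq.swap ∈ H := by
    rintro ⟨p, q⟩ hpq
    rw [hH, Finset.mem_filter] at hpq
    obtain ⟨hmem, hne, hcnt⟩ := hpq
    rw [Finset.mem_product] at hmem
    obtain ⟨hp, hq⟩ := hmem
    simp only at hne hcnt
    have hzero : S.filter (fun x => det3 p q x = 0) = {p, q} := by
      ext x
      simp only [Finset.mem_filter, Finset.mem_insert, Finset.mem_singleton]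
      constructor
      · rintro ⟨hxS, hx0⟩
        by_contra hc
        push_neg at hc
        exact hgp p hp q hq x hxS hne (Ne.symm hc.1) (Ne.symm hc.2) hx0
      · intro h
        rcases h with h | h
        · subst h; exact ⟨hp, det3_pp _ _⟩
        · subst h; exact ⟨hq, det3_qq _ _⟩
    have hzc : (S.filter (fun x => det3 p q x = 0)).card = 2 := by
      rw [hzero, Finset.card_insert_of_notMem (by simp [hne]), Finset.card_singleton]
    have h1 : (S.filter (fun x => det3 p q x < 0)).card
        + (S.filter (fun x => ¬ det3 p q x < 0)).card = n := by
      rw [Finset.card_filter_add_card_filter_not, hcard]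
    have h2 : S.filter (fun x => ¬ det3 p q x < 0)
        = S.filter (fun x => det3 p q x = 0) ∪ S.filter (fun x => 0 < det3 p q x) := by
      ext x
      simp only [Finset.mem_filter, Finset.mem_union]
      constructor
      · rintro ⟨hxS, hx⟩
        rcases lt_trichotomy (det3 p q x) 0 with h | h | h
        · exact absurd h hx
        · exact Or.inl ⟨hxS, h⟩
        · exact Or.inr ⟨hxS, h⟩
      · rintro (⟨hxS, hx⟩ | ⟨hxS, hx⟩)
        · exact ⟨hxS, by rw [hx]; exact lt_irrefl 0⟩
        · exact ⟨hxS, by linarith⟩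
    have hdisj : Disjoint (S.filter (fun x => det3 p q x = 0))
        (S.filter (fun x => 0 < det3 p q x)) := by
      rw [Finset.disjoint_left]
      intro x hx1 hx2
      obtain ⟨_, e1⟩ := Finset.mem_filter.mp hx1
      obtain ⟨_, e2⟩ := Finset.mem_filter.mp hx2
      linarith
    have h3 : (S.filter (fun x => ¬ det3 p q x < 0)).card
        = 2 + (S.filter (fun x => 0 < det3 p q x)).card := by
      rw [h2, Finset.card_union_of_disjoint hdisj, hzc]
    have hflip : S.filter (fun x => det3 q p x < 0) = S.filter (fun x => 0 < det3 p q x) := by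
      apply Finset.filter_congr
      intro x _
      rw [det3_swap]
      simp
    rw [hH, Finset.mem_filter]
    refine ⟨Finset.mem_product.mpr ⟨hq, hp⟩, ?_, ?_⟩
    · exact (Ne.symm hne)
    · show (S.filter (fun x => det3 q p x < 0)).card = n / 2 - 1
      rw [hflip]
      omega
  -- each halving edge or its swap is good
  have hgq : ∀ pq : Pt × Pt, pq ∈ H → pq ∈ Good ∨ pq.swap ∈ Good := by
    rintro ⟨p, q⟩ hpq
    have hpq' := hpq
    rw [hH, Finset.mem_filter] at hpq'
    obtain ⟨hmem, hne, hcnt⟩ := hpq'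
    rw [Finset.mem_product] at hmem
    obtain ⟨hp, hq⟩ := hmem
    simp only at hne hcnt
    have hsw := hswap (p, q) hpq
    rcases good_or t₁ t₂ t₃ p q h12 h13 h23 htri hne (hsub hp) (hsub hq) with h | h
    · left
      rw [hGood, Finset.mem_filter]
      exact ⟨Finset.mem_product.mpr ⟨hp, hq⟩, hne, hcnt, h⟩
    · right
      rw [hH, Finset.mem_filter] at hsw
      obtain ⟨hmem2, hne2, hcnt2⟩ := hsw
      rw [hGood, Finset.mem_filter]
      exact ⟨hmem2, hne2, hcnt2, h⟩
  have hGsubH : Good ⊆ H := by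
    intro e he
    rw [hGood, Finset.mem_filter] at he
    rw [hH, Finset.mem_filter]
    exact ⟨he.1, he.2.1, he.2.2.1⟩
  -- part (a) : card H ≤ 2 * card Good
  have hparta : H.card ≤ 2 * Good.card := by
    have hinj : (H \ Good).card ≤ Good.card := by
      apply Finset.card_le_card_of_injOn Prod.swap
      · intro e he
        rw [Finset.mem_coe, Finset.mem_sdiff] at he
        rcases hgq e he.1 with h | h
        · exact absurd h he.2
        · exact h
      · intro x _ y _ h
        exact Prod.swap_injective h
    have := Finset.card_sdiff_add_card_eq_card hGsubH
    omega
  -- part (b) : n ≤ card H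
  have hexist : ∀ p ∈ S, ∃ q, q ∈ S ∧ p ≠ q ∧
      (S.filter (fun x => det3 p q x < 0)).card = n / 2 - 1 := by
    intro p hp
    have hQp : ∀ q ∈ S.erase p, q ≠ p := fun q hq => (Finset.mem_erase.mp hq).1
    have hgp' : ∀ q ∈ S.erase p, ∀ x ∈ S.erase p, q ≠ x → det3 p q x ≠ 0 := by
      intro q hq x hx hqx
      have hq' := Finset.mem_erase.mp hq
      have hx' := Finset.mem_erase.mp hx
      exact hgp p hp q hq'.2 x hx'.2 (Ne.symm hq'.1) (Ne.symm hx'.1) hqx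
    have hec : (S.erase p).card = n - 1 := by rw [Finset.card_erase_of_mem hp, hcard]
    have hodd : (S.erase p).card % 2 = 1 := by omega
    obtain ⟨q, hq, hcnt⟩ := exists_halving p (S.erase p) hQp hgp' hodd
    have hq' := Finset.mem_erase.mp hq
    refine ⟨q, hq'.2, Ne.symm hq'.1, ?_⟩
    have hfeq : S.filter (fun x => det3 p q x < 0)
        = (S.erase p).filter (fun x => det3 p q x < 0) := by
      ext x
      simp only [Finset.mem_filter, Finset.mem_erase]
      constructor
      · rintro ⟨hxS, hxd⟩
        refine ⟨⟨?_, hxS⟩, hxd⟩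
        rintro rfl
        rw [det3_pp] at hxd
        exact lt_irrefl 0 hxd
      · rintro ⟨⟨_, hxS⟩, hxd⟩
        exact ⟨hxS, hxd⟩
    rw [hfeq, hcnt, hec]
    omega
  have hpartb : n ≤ H.card := by
    have hScard : S.card ≤ H.card := by
      apply Finset.card_le_card_of_injOn (fun p => (p,
        if h : ∃ q, q ∈ S ∧ p ≠ q ∧ (S.filter (fun x => det3 p q x < 0)).card = n / 2 - 1
        then Classical.choose h else p))
      · intro p hp
        obtain ⟨q, hq, hne, hcnt⟩ := hexist p hp
        have hex : ∃ q, q ∈ S ∧ p ≠ q ∧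
            (S.filter (fun x => det3 p q x < 0)).card = n / 2 - 1 := ⟨q, hq, hne, hcnt⟩
        simp only [dif_pos hex]
        obtain ⟨hq', hne', hcnt'⟩ := Classical.choose_spec hex
        rw [hH, Finset.mem_coe, Finset.mem_filter]
        exact ⟨Finset.mem_product.mpr ⟨hp, hq'⟩, hne', hcnt'⟩
      · intro x _ y _ h
        simpa using congrArg Prod.fst h
    omega
  exact ⟨hparta, by omega⟩
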